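/- arXiv:2005.03146 — 6 statements merged into one kernel-verified Lean document; each statement's English description precedes it below -/
import Mathlib

section
/- Let n ≥ 3 and consider the star graph S_n with center a_1. Define f : V(S_n) → ℝ by f(a_1) = n, f(a_2) = 2n − 1, and f(a_i) = n − 1 for 3 ≤ i ≤ n. Then Var_2(M_{S_n} f) / Var_2 f = ((n−1)² + (n−2))^{1/2} / n, and this quantity is strictly greater than (n−1)/n. In particular, sup{ Var_2(M_{S_n} f)/Var_2 f : Var_2 f > 0 } > 1 − 1/n, so the analogue for p = 2 of the identity C_{S_n,p} = 1 − 1/n fails. -/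
open scoped Classical

/-- The ball of radius `r` around `e` in the graph metric of `G`
(only vertices reachable from `e` are at finite distance). -/
noncomputable def gball {V : Type*} [Fintype V] (G : SimpleGraph V) (e : V) (r : ℕ) :
    Finset V :=
  Finset.univ.filter fun m => G.Reachable e m ∧ G.dist e m ≤ r

/-- The centered Hardy–Littlewood maximal function on a finite graph. -/
noncomputable def mxHL {V : Type*} [Fintype V] (G : SimpleGraph V) (f : V → ℝ) (e : V) : ℝ :=
  ⨆ r : ℕ, (1 / ((gball G e r).card : ℝ)) * ∑ m ∈ gball G e r, |f m|

/-- The fractional centered Hardy–Littlewood maximal function on a finite graph. -/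
noncomputable def mxFr {V : Type*} [Fintype V] (G : SimpleGraph V) (α : ℝ) (f : V → ℝ)
    (e : V) : ℝ :=
  ⨆ r : ℕ, ((gball G e r).card : ℝ) ^ (α - 1) * ∑ m ∈ gball G e r, |f m|

/-- The `p`-variation of `f : V → ℝ` with respect to the graph `G`
(vertices at distance `1` are exactly the adjacent ones). -/
noncomputable def vp {V : Type*} [Fintype V] (G : SimpleGraph V) (p : ℝ) (f : V → ℝ) : ℝ :=
  ((1 / 2) * ∑ v : V, ∑ w : V, if G.Adj v w then |f v - f w| ^ p else 0) ^ (1 / p)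

/-- The star graph on `Fin n`, with center the vertex with value `0`. -/
def starG (n : ℕ) : SimpleGraph (Fin n) where
  Adj v w := v ≠ w ∧ (v.val = 0 ∨ w.val = 0)
  symm := ⟨fun _ _ h => ⟨h.1.symm, h.2.symm⟩⟩
  loopless := ⟨fun _ h => h.1 rfl⟩

/-- The `ℓ²` norm of a function on a finite vertex set. -/
noncomputable def nrm2 {V : Type*} [Fintype V] (g : V → ℝ) : ℝ :=
  Real.sqrt (∑ v : V, g v ^ 2)

/-!
On the star graph any two vertices are at distance at most 2, so a ball is a single vertex, a
leaf together with the center, or the whole graph. The total mass of `f` is `n² + 1`, and the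
whole graph gives the best average `(n² + 1)/n` at every vertex except `a₂`, where the singleton
ball gives `2n - 1`. Hence `M f` is constant off `a₂`, so `Var₂(M f) = (n² - n - 1)/n` while
`Var₂ f = √(n² - n - 1)`, and `n² - n - 1 = (n - 1)² + (n - 2)`. The supremum is finite because
on a connected graph `M g` takes values between `min |g|` and `max |g|`, and that gap is at most
`diam G · Var₂ g`.
-/

open Finset

section Variation

variable {V : Type*} [Fintype V] (G : SimpleGraph V)

lemma vp_two_eq_sqrt (g : V → ℝ) :
    vp G 2 g = √((1 / 2) * ∑ v, ∑ w, if G.Adj v w then (g v - g w) ^ 2 else 0) := by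
  rw [vp, ← Real.sqrt_eq_rpow]
  simp only [Real.rpow_two, sq_abs]

lemma vp_two_nonneg (g : V → ℝ) : 0 ≤ vp G 2 g :=
  vp_two_eq_sqrt G g ▸ Real.sqrt_nonneg _

lemma abs_sub_le_vp_two_of_adj (g : V → ℝ) {v w : V} (h : G.Adj v w) :
    |g v - g w| ≤ vp G 2 g := by
  rw [vp_two_eq_sqrt, ← Real.sqrt_sq_eq_abs]
  refine Real.sqrt_le_sqrt ?_
  set T : V → V → ℝ := fun x y => if G.Adj x y then (g x - g y) ^ 2 else 0
  have hT : ∀ x y, 0 ≤ T x y := fun x y => by dsimp only [T]; split_ifs <;> positivity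
  -- both orientations of the edge `vw` occur in the double sum
  have hpair : T v w + T w v ≤ ∑ x, ∑ y, T x y :=
    calc T v w + T w v ≤ ∑ y, T v y + ∑ y, T w y :=
          add_le_add (single_le_sum (fun y _ => hT v y) (mem_univ w))
            (single_le_sum (fun y _ => hT w y) (mem_univ v))
      _ = ∑ x ∈ {v, w}, ∑ y, T x y := by rw [sum_pair h.ne]
      _ ≤ ∑ x, ∑ y, T x y :=
          sum_le_sum_of_subset_of_nonneg (subset_univ _) fun x _ _ => sum_nonneg fun y _ => hT x y
  have hvw : T v w = (g v - g w) ^ 2 := if_pos h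
  have hwv : T w v = (g v - g w) ^ 2 := (if_pos h.symm).trans (sub_sq_comm _ _)
  linarith

lemma abs_sub_le_length_mul_vp_two (g : V → ℝ) {u w : V} (p : G.Walk u w) :
    |g u - g w| ≤ p.length * vp G 2 g := by
  induction p with
  | nil => simp
  | @cons u v w h p ih =>
    calc |g u - g w| ≤ |g u - g v| + |g v - g w| := abs_sub_le _ _ _
      _ ≤ vp G 2 g + p.length * vp G 2 g := add_le_add (abs_sub_le_vp_two_of_adj G g h) ih
      _ = (p.cons h).length * vp G 2 g := by
          rw [SimpleGraph.Walk.length_cons, Nat.cast_succ]; ring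

lemma abs_sub_le_dist_mul_vp_two (g : V → ℝ) {u w : V} (h : G.Reachable u w) :
    |g u - g w| ≤ G.dist u w * vp G 2 g := by
  obtain ⟨p, hp⟩ := h.exists_walk_length_eq_dist
  exact hp ▸ abs_sub_le_length_mul_vp_two G g p

lemma vp_two_le_card_mul {h : V → ℝ} {K : ℝ} (hK₀ : 0 ≤ K)
    (hK : ∀ v w, |h v - h w| ≤ K) :
    vp G 2 h ≤ Fintype.card V * K := by
  rw [vp_two_eq_sqrt, ← Real.sqrt_sq (by positivity : 0 ≤ (Fintype.card V : ℝ) * K)]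
  refine Real.sqrt_le_sqrt ?_
  have hterm : ∀ v w, (if G.Adj v w then (h v - h w) ^ 2 else 0) ≤ K ^ 2 := by
    intro v w
    split_ifs
    · exact sq_le_sq' (abs_le.1 (hK v w)).1 (abs_le.1 (hK v w)).2
    · positivity
  calc (1 / 2) * ∑ v, ∑ w, (if G.Adj v w then (h v - h w) ^ 2 else 0)
      ≤ (1 / 2) * ∑ _v : V, ∑ _w : V, K ^ 2 := by gcongr with v _ w _; exact hterm v w
    _ ≤ (Fintype.card V * K) ^ 2 := by
        simp only [sum_const, card_univ, nsmul_eq_mul]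
        nlinarith [sq_nonneg ((Fintype.card V : ℝ) * K)]

end Variation

section MaximalFunction

variable {V : Type*} [Fintype V] (G : SimpleGraph V)

lemma mem_gball_self (e : V) (r : ℕ) : e ∈ gball G e r := by
  simp [gball]

lemma gball_zero (e : V) : gball G e 0 = {e} := by
  ext m
  simp only [gball, mem_filter, mem_univ, true_and, mem_singleton, Nat.le_zero]
  constructor
  · rintro ⟨hre, hd⟩
    exact (hre.dist_eq_zero_iff.1 hd).symm
  · rintro rfl
    exact ⟨.refl m, SimpleGraph.dist_self⟩

lemma gball_eq_univ {e : V} {r : ℕ} (hG : G.Connected) (h : ∀ m, G.dist e m ≤ r) :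
    gball G e r = univ := by
  ext m
  simp [gball, hG.preconnected e m, h m]

lemma mxHL_mem_Icc (g : V → ℝ) (e : V) {lo hi : ℝ} (hlo : ∀ m, lo ≤ |g m|)
    (hhi : ∀ m, |g m| ≤ hi) : mxHL G g e ∈ Set.Icc lo hi := by
  have havg : ∀ r : ℕ,
      lo ≤ (1 / ((gball G e r).card : ℝ)) * ∑ m ∈ gball G e r, |g m| ∧
      (1 / ((gball G e r).card : ℝ)) * ∑ m ∈ gball G e r, |g m| ≤ hi := by
    intro r
    have hcard : (0 : ℝ) < (gball G e r).card := by
      exact_mod_cast card_pos.2 ⟨e, mem_gball_self G e r⟩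
    have hsum_lo := card_nsmul_le_sum (gball G e r) (fun m => |g m|) lo fun m _ => hlo m
    have hsum_hi := sum_le_card_nsmul (gball G e r) (fun m => |g m|) hi fun m _ => hhi m
    rw [nsmul_eq_mul] at hsum_lo hsum_hi
    rw [one_div_mul_eq_div, le_div_iff₀ hcard, div_le_iff₀ hcard]
    constructor <;> linarith
  exact ⟨(havg 0).1.trans (le_ciSup ⟨hi, by rintro _ ⟨r, rfl⟩; exact (havg r).2⟩ 0),
    ciSup_le fun r => (havg r).2⟩

lemma mxHL_eq_of_le_of_eq {g : V → ℝ} {e : V} {M : ℝ} (r₀ : ℕ)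
    (hle : ∀ r, (1 / ((gball G e r).card : ℝ)) * ∑ m ∈ gball G e r, |g m| ≤ M)
    (heq : (1 / ((gball G e r₀).card : ℝ)) * ∑ m ∈ gball G e r₀, |g m| = M) :
    mxHL G g e = M :=
  le_antisymm (ciSup_le hle) (heq ▸ le_ciSup ⟨M, by rintro _ ⟨r, rfl⟩; exact hle r⟩ r₀)

lemma vp_two_mxHL_le (hG : G.Connected) (g : V → ℝ) :
    vp G 2 (mxHL G g) ≤ Fintype.card V * (G.diam * vp G 2 g) := by
  have : Nonempty V := hG.nonempty
  obtain ⟨umax, -, hmax⟩ := exists_max_image univ (fun m => |g m|) univ_nonempty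
  obtain ⟨umin, -, hmin⟩ := exists_min_image univ (fun m => |g m|) univ_nonempty
  have hosc : |g umax| - |g umin| ≤ G.diam * vp G 2 g :=
    calc |g umax| - |g umin| ≤ |g umax - g umin| := abs_sub_abs_le_abs_sub _ _
      _ ≤ G.dist umax umin * vp G 2 g := abs_sub_le_dist_mul_vp_two G g (hG umax umin)
      _ ≤ G.diam * vp G 2 g := by
          gcongr
          · exact vp_two_nonneg G g
          · exact G.dist_le_diam (G.connected_iff_ediam_ne_top.1 hG)
  have hrange : ∀ e, mxHL G g e ∈ Set.Icc |g umin| |g umax| := fun e =>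
    mxHL_mem_Icc G g e (fun m => hmin m (mem_univ m)) (fun m => hmax m (mem_univ m))
  refine vp_two_le_card_mul G ((sub_nonneg.2 (hmax umin (mem_univ _))).trans hosc) fun v w => ?_
  obtain ⟨hv₁, hv₂⟩ := hrange v
  obtain ⟨hw₁, hw₂⟩ := hrange w
  rw [abs_le]
  constructor <;> linarith

end MaximalFunction

lemma sum_eq_add_add_of_eq_off_pair {α : Type*} [Fintype α] {a b : α} (hab : a ≠ b)
    (φ : α → ℝ) {x : ℝ} (hφ : ∀ v, v ≠ a → v ≠ b → φ v = x) :
    ∑ v, φ v = φ a + φ b + (Fintype.card α - 2) * x := by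
  have hb : b ∈ univ.erase a := mem_erase.2 ⟨hab.symm, mem_univ b⟩
  have hrest : ∀ v ∈ (univ.erase a).erase b, φ v = x := fun v hv => by
    obtain ⟨hvb, hva, -⟩ := by simpa only [mem_erase] using hv
    exact hφ v hva hvb
  have hcard : 2 ≤ Fintype.card α := Fintype.one_lt_card_iff.2 ⟨a, b, hab⟩
  rw [← add_sum_erase univ φ (mem_univ a), ← add_sum_erase _ φ hb, sum_congr rfl hrest,
    sum_const, card_erase_of_mem hb, card_erase_of_mem (mem_univ a), card_univ, nsmul_eq_mul,
    Nat.cast_sub (by omega), Nat.cast_sub (by omega)]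
  ring

section StarGraph

variable {n : ℕ} {c : Fin n}

lemma two_le_of_ne_of_val_eq_zero (hc : (c : ℕ) = 0) {a : Fin n} (hac : a ≠ c) : 2 ≤ n := by
  have : (a : ℕ) ≠ 0 := fun h => hac (Fin.ext (h.trans hc.symm))
  omega

lemma starG_adj_iff (hc : (c : ℕ) = 0) {v w : Fin n} :
    (starG n).Adj v w ↔ v ≠ w ∧ (v = c ∨ w = c) := by
  simp only [starG, Fin.ext_iff, hc]

lemma starG_reachable_center (hc : (c : ℕ) = 0) (v : Fin n) : (starG n).Reachable v c := by
  by_cases hv : v = c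
  · exact hv ▸ .refl v
  · exact ((starG_adj_iff hc).2 ⟨hv, Or.inr rfl⟩).reachable

lemma starG_connected (hc : (c : ℕ) = 0) : (starG n).Connected :=
  haveI : Nonempty (Fin n) := ⟨c⟩
  ⟨fun v w => (starG_reachable_center hc v).trans (starG_reachable_center hc w).symm⟩

lemma starG_dist_center_le_one (hc : (c : ℕ) = 0) (v : Fin n) : (starG n).dist c v ≤ 1 := by
  by_cases hv : v = c
  · simp [hv]
  · exact SimpleGraph.dist_eq_one_iff_adj.2 ((starG_adj_iff hc).2 ⟨Ne.symm hv, Or.inl rfl⟩) |>.le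

lemma starG_dist_le_two (hc : (c : ℕ) = 0) (v w : Fin n) : (starG n).dist v w ≤ 2 :=
  calc (starG n).dist v w ≤ (starG n).dist v c + (starG n).dist c w :=
        (starG_connected hc).dist_triangle
    _ ≤ 1 + 1 := by
        rw [SimpleGraph.dist_comm]
        exact add_le_add (starG_dist_center_le_one hc v) (starG_dist_center_le_one hc w)

lemma gball_starG_center (hc : (c : ℕ) = 0) {r : ℕ} (hr : 1 ≤ r) :
    gball (starG n) c r = univ :=
  gball_eq_univ _ (starG_connected hc) fun m => (starG_dist_center_le_one hc m).trans hr

lemma gball_starG_of_two_le (hc : (c : ℕ) = 0) (e : Fin n) {r : ℕ} (hr : 2 ≤ r) :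
    gball (starG n) e r = univ :=
  gball_eq_univ _ (starG_connected hc) fun m => (starG_dist_le_two hc e m).trans hr

lemma gball_starG_leaf_one (hc : (c : ℕ) = 0) {v : Fin n} (hv : v ≠ c) :
    gball (starG n) v 1 = {v, c} := by
  ext m
  simp only [gball, mem_filter, mem_univ, true_and, mem_insert, mem_singleton]
  constructor
  · rintro ⟨hre, hd⟩
    interval_cases h : (starG n).dist v m
    · exact Or.inl (hre.dist_eq_zero_iff.1 h).symm
    · obtain ⟨-, hvc | hmc⟩ := (starG_adj_iff hc).1 (SimpleGraph.dist_eq_one_iff_adj.1 h)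
      · exact absurd hvc hv
      · exact Or.inr hmc
  · rintro (rfl | rfl)
    · simp
    · have hadj := (starG_adj_iff hc).2 ⟨hv, Or.inr rfl⟩
      exact ⟨hadj.reachable, (SimpleGraph.dist_eq_one_iff_adj.2 hadj).le⟩

lemma vp_two_starG (hc : (c : ℕ) = 0) (g : Fin n → ℝ) :
    vp (starG n) 2 g = √(∑ w, (g c - g w) ^ 2) := by
  -- an edge term is seen either from its center end `v = c` or from its leaf end `w = c`
  have hsplit : ∀ v w, (if (starG n).Adj v w then (g v - g w) ^ 2 else 0) =
      (if v = c then (g c - g w) ^ 2 else 0) + (if w = c then (g c - g v) ^ 2 else 0) := by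
    intro v w
    by_cases hv : v = c <;> by_cases hw : w = c <;>
      simp [starG_adj_iff hc, hv, hw, @eq_comm _ c, sub_sq_comm (g v)]
  rw [vp_two_eq_sqrt]
  simp only [hsplit, sum_add_distrib, sum_ite_irrel, sum_const_zero, sum_ite_eq', mem_univ, if_true]
  congr 1
  ring

end StarGraph

section StarExample

variable {n : ℕ} {c a : Fin n} {f : Fin n → ℝ} (hac : a ≠ c) (hfc : f c = n)
  (hfa : f a = 2 * n - 1) (hf : ∀ v, v ≠ c → v ≠ a → f v = n - 1)
include hac hfc hfa hf

lemma sum_abs_starExample : ∑ m, |f m| = n ^ 2 + 1 := by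
  have hn : (1 : ℝ) ≤ n := by exact_mod_cast a.pos
  rw [sum_eq_add_add_of_eq_off_pair hac.symm (fun m => |f m|) (x := n - 1)
    fun v hvc hva => by rw [hf v hvc hva, abs_of_nonneg (by linarith)]]
  rw [hfc, hfa, Fintype.card_fin, abs_of_nonneg (by linarith), abs_of_nonneg (by linarith)]
  ring

lemma avg_univ_starExample :
    1 / ((univ : Finset (Fin n)).card : ℝ) * ∑ m ∈ univ, |f m| = (n ^ 2 + 1) / n := by
  rw [sum_abs_starExample hac hfc hfa hf, card_univ, Fintype.card_fin, one_div_mul_eq_div]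

lemma mxHL_starExample_center (hc : (c : ℕ) = 0) : mxHL (starG n) f c = (n ^ 2 + 1) / n := by
  have hn : (1 : ℝ) ≤ n := by exact_mod_cast a.pos
  refine mxHL_eq_of_le_of_eq _ 1 (fun r => ?_) ?_
  · rcases Nat.eq_zero_or_pos r with rfl | hr
    · rw [gball_zero, sum_singleton, card_singleton, hfc, abs_of_nonneg (by linarith),
        le_div_iff₀ (by linarith)]
      nlinarith
    · rw [gball_starG_center hc hr, avg_univ_starExample hac hfc hfa hf]
  · rw [gball_starG_center hc le_rfl, avg_univ_starExample hac hfc hfa hf]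

lemma mxHL_starExample_of_ne (hc : (c : ℕ) = 0) {v : Fin n} (hvc : v ≠ c) (hva : v ≠ a) :
    mxHL (starG n) f v = (n ^ 2 + 1) / n := by
  have hn : (1 : ℝ) ≤ n := by exact_mod_cast a.pos
  refine mxHL_eq_of_le_of_eq _ 2 (fun r => ?_) ?_
  · rcases r with _ | _ | r
    · rw [gball_zero, sum_singleton, card_singleton, hf v hvc hva, abs_of_nonneg (by linarith),
        le_div_iff₀ (by linarith)]
      nlinarith
    · rw [gball_starG_leaf_one hc hvc, sum_pair hvc, card_pair hvc, hf v hvc hva, hfc,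
        abs_of_nonneg (by linarith), abs_of_nonneg (by linarith), one_div_mul_eq_div,
        div_le_div_iff₀ (by norm_num) (by linarith)]
      push_cast
      nlinarith
    · rw [gball_starG_of_two_le hc v (by omega), avg_univ_starExample hac hfc hfa hf]
  · rw [gball_starG_of_two_le hc v le_rfl, avg_univ_starExample hac hfc hfa hf]

lemma mxHL_starExample_leaf (hc : (c : ℕ) = 0) : mxHL (starG n) f a = 2 * n - 1 := by
  have hn : (2 : ℝ) ≤ n := by exact_mod_cast two_le_of_ne_of_val_eq_zero hc hac
  refine mxHL_eq_of_le_of_eq _ 0 (fun r => ?_) ?_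
  · rcases r with _ | _ | r
    · rw [gball_zero, sum_singleton, card_singleton, hfa, abs_of_nonneg (by linarith)]
      norm_num
    · rw [gball_starG_leaf_one hc hac, sum_pair hac, card_pair hac, hfa, hfc,
        abs_of_nonneg (by linarith), abs_of_nonneg (by linarith), one_div_mul_eq_div,
        div_le_iff₀ (by norm_num)]
      push_cast
      linarith
    · rw [gball_starG_of_two_le hc a (by omega), avg_univ_starExample hac hfc hfa hf,
        div_le_iff₀ (by linarith)]
      nlinarith
  · rw [gball_zero, sum_singleton, card_singleton, hfa, abs_of_nonneg (by linarith)]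
    norm_num

lemma vp_two_starExample (hc : (c : ℕ) = 0) :
    vp (starG n) 2 f = √((n - 1) ^ 2 + (n - 2)) := by
  rw [vp_two_starG hc, sum_eq_add_add_of_eq_off_pair hac.symm _ (x := 1)
    fun v hvc hva => by rw [hfc, hf v hvc hva]; ring, hfc, hfa, Fintype.card_fin]
  congr 1
  ring

lemma vp_two_mxHL_starExample (hc : (c : ℕ) = 0) :
    vp (starG n) 2 (mxHL (starG n) f) = ((n - 1) ^ 2 + (n - 2)) / n := by
  have hn : (2 : ℝ) ≤ n := by exact_mod_cast two_le_of_ne_of_val_eq_zero hc hac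
  have hMc := mxHL_starExample_center hac hfc hfa hf hc
  rw [vp_two_starG hc, sum_eq_add_add_of_eq_off_pair hac.symm _ (x := 0)
      fun v hvc hva => by rw [hMc, mxHL_starExample_of_ne hac hfc hfa hf hc hvc hva]; ring,
    hMc, mxHL_starExample_leaf hac hfc hfa hf hc,
    show ((n ^ 2 + 1) / n - (n ^ 2 + 1) / n) ^ 2 + ((n ^ 2 + 1) / n - (2 * n - 1)) ^ 2
        + (Fintype.card (Fin n) - 2) * 0 = (((n - 1) ^ 2 + (n - 2)) / n : ℝ) ^ 2 by
      field_simp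
      ring]
  exact Real.sqrt_sq (div_nonneg (by nlinarith) (by linarith))

end StarExample

/-- on the star graph `S_n` (`n ≥ 3`), the explicit function `f` given by
`f a₁ = n`, `f a₂ = 2n - 1`, `f aᵢ = n - 1` otherwise has
`Var₂(M f)/Var₂ f = √((n-1)² + (n-2))/n > (n-1)/n`; hence the analogue of
`C_{S_n,p} = 1 - 1/n` fails for `p = 2`. -/
theorem starGraph_var_two_counterexample (n : ℕ) (hn : 3 ≤ n) (f : Fin n → ℝ)
    (hfdef : f = fun v => if v = ⟨0, by omega⟩ then (n : ℝ) else
        if v = ⟨1, by omega⟩ then 2 * (n : ℝ) - 1 else (n : ℝ) - 1) :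
    vp (starG n) 2 (mxHL (starG n) f) / vp (starG n) 2 f =
      Real.sqrt (((n : ℝ) - 1) ^ 2 + ((n : ℝ) - 2)) / n ∧
    ((n : ℝ) - 1) / n < Real.sqrt (((n : ℝ) - 1) ^ 2 + ((n : ℝ) - 2)) / n ∧
    1 - 1 / (n : ℝ) <
      sSup {c : ℝ | ∃ f' : Fin n → ℝ, 0 < vp (starG n) 2 f' ∧
        c = vp (starG n) 2 (mxHL (starG n) f') / vp (starG n) 2 f'} := by
  set c : Fin n := ⟨0, by omega⟩
  set a : Fin n := ⟨1, by omega⟩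
  have hc : (c : ℕ) = 0 := rfl
  have hac : a ≠ c := by simp [a, c, Fin.ext_iff]
  have hfc : f c = n := by simp [hfdef]
  have hfa : f a = 2 * n - 1 := by simp [hfdef, hac]
  have hf : ∀ v, v ≠ c → v ≠ a → f v = n - 1 := fun v hvc hva => by simp [hfdef, hvc, hva]
  have hN : (3 : ℝ) ≤ n := by exact_mod_cast hn
  have hA : 0 < ((n : ℝ) - 1) ^ 2 + (n - 2) := by nlinarith
  have hvpf := vp_two_starExample hac hfc hfa hf hc
  have hratio : vp (starG n) 2 (mxHL (starG n) f) / vp (starG n) 2 f =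
      √(((n : ℝ) - 1) ^ 2 + (n - 2)) / n := by
    rw [vp_two_mxHL_starExample hac hfc hfa hf hc, hvpf, div_right_comm, Real.div_sqrt]
  have hlt : ((n : ℝ) - 1) / n < √(((n : ℝ) - 1) ^ 2 + (n - 2)) / n := by
    gcongr
    exact Real.lt_sqrt_of_sq_lt (by linarith)
  refine ⟨hratio, hlt, ?_⟩
  have hbdd : BddAbove {c : ℝ | ∃ f' : Fin n → ℝ, 0 < vp (starG n) 2 f' ∧
      c = vp (starG n) 2 (mxHL (starG n) f') / vp (starG n) 2 f'} := by
    refine ⟨n * (starG n).diam, ?_⟩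
    rintro _ ⟨g, hg, rfl⟩
    rw [div_le_iff₀ hg, mul_assoc]
    simpa using vp_two_mxHL_le _ (starG_connected hc) g
  calc 1 - 1 / (n : ℝ) = (n - 1) / n := by field_simp
    _ < _ := hlt
    _ = _ := hratio.symm
    _ ≤ _ := le_csSup hbdd ⟨f, hvpf ▸ Real.sqrt_pos.2 hA, rfl⟩
end

section
/- Let 0 < p ≤ 1 and let n ≥ 2 be an integer. Let a_1 ≤ a_2 ≤ … ≤ a_n be real numbers and let m = (a_1 + a_2 + … + a_n)/n be their mean. Then (n−1)(a_n − m)^p ≤ ((n−1)/n)^p · Σ_{1 ≤ i < j ≤ n} (a_j − a_i)^p. -/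
/-!
Put `R = aₙ - a₁`. Of the `n` terms of `n (aₙ - m) = ∑ᵢ (aₙ - aᵢ)` one vanishes and the others
are at most `R`, so `aₙ - m ≤ (n-1)/n · R`. On the other side, the pair `(1, n)` and, for each
`1 < k < n`, the two pairs `(1, k)`, `(k, n)` each contribute at least `R^p` to
`∑_{i<j} (aⱼ - aᵢ)^p`, since `t ↦ t^p` is subadditive for `0 < p ≤ 1`; hence that sum is at least
`(n-1) R^p`.
-/

open Finset

theorem Real.rpow_sub_le_rpow_sub_add_rpow_sub {p x y z : ℝ} (hxy : x ≤ y) (hyz : y ≤ z)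
    (hp0 : 0 ≤ p) (hp1 : p ≤ 1) : (z - x) ^ p ≤ (y - x) ^ p + (z - y) ^ p := by
  simpa using Real.rpow_add_le_add_rpow (sub_nonneg.2 hxy) (sub_nonneg.2 hyz) hp0 hp1

theorem sum_sub_le_card_sub_one_mul {ι : Type*} [Fintype ι] {a : ι → ℝ} {lo : ι}
    (hlo : ∀ i, a lo ≤ a i) (hi : ι) :
    ∑ i, (a hi - a i) ≤ ((Fintype.card ι : ℝ) - 1) * (a hi - a lo) := by
  classical
  rw [← add_sum_erase _ _ (mem_univ hi), sub_self, zero_add]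
  calc ∑ i ∈ univ.erase hi, (a hi - a i) ≤ ∑ _i ∈ univ.erase hi, (a hi - a lo) :=
        sum_le_sum fun i _ => sub_le_sub_left (hlo i) _
    _ = ((Fintype.card ι : ℝ) - 1) * (a hi - a lo) := by
        rw [sum_const, nsmul_eq_mul, cast_card_erase_of_mem (mem_univ hi), card_univ]

theorem card_sub_one_mul_rpow_le_sum_rpow_sub {ι : Type*} [Fintype ι] [LinearOrder ι]
    {p : ℝ} (hp0 : 0 < p) (hp1 : p ≤ 1) {a : ι → ℝ} (ha : Monotone a) {lo hi : ι}
    (hlo : IsBot lo) (hhi : IsTop hi) :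
    ((Fintype.card ι : ℝ) - 1) * (a hi - a lo) ^ p ≤
      ∑ i, ∑ j, if i < j then (a j - a i) ^ p else 0 := by
  classical
  have hzero : ∀ x : ℝ, (x - x) ^ p = 0 := fun x => by
    rw [sub_self, Real.zero_rpow hp0.ne']
  have hterm : ∀ {i j}, i ≤ j → (if i < j then (a j - a i) ^ p else 0) = (a j - a i) ^ p := by
    intro i j hij
    rcases hij.lt_or_eq with h | rfl
    · exact if_pos h
    · rw [if_neg (lt_irrefl _), hzero]
  have hrow_lo : ∑ j, (if lo < j then (a j - a lo) ^ p else 0) =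
      ∑ j ∈ univ.erase lo, (a j - a lo) ^ p := by
    rw [sum_erase (f := fun j => (a j - a lo) ^ p) univ (hzero _)]
    exact sum_congr rfl fun j _ => hterm (hlo j)
  have hrow : ∀ i, (a hi - a i) ^ p ≤ ∑ j, if i < j then (a j - a i) ^ p else 0 := by
    intro i
    rw [← hterm (hhi i)]
    refine single_le_sum (f := fun j => if i < j then (a j - a i) ^ p else 0)
      (fun j _ => ?_) (mem_univ hi)
    split_ifs with h
    · exact Real.rpow_nonneg (sub_nonneg.2 (ha h.le)) p
    · exact le_rfl
  calc ((Fintype.card ι : ℝ) - 1) * (a hi - a lo) ^ p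
        = ∑ _k ∈ univ.erase lo, (a hi - a lo) ^ p := by
          rw [sum_const, nsmul_eq_mul, cast_card_erase_of_mem (mem_univ lo), card_univ]
    _ ≤ ∑ k ∈ univ.erase lo, ((a k - a lo) ^ p + (a hi - a k) ^ p) :=
          sum_le_sum fun k _ => Real.rpow_sub_le_rpow_sub_add_rpow_sub
            (ha (hlo k)) (ha (hhi k)) hp0.le hp1
    _ = ∑ k ∈ univ.erase lo, (a k - a lo) ^ p + ∑ k ∈ univ.erase lo, (a hi - a k) ^ p :=
          sum_add_distrib
    _ ≤ (∑ j, if lo < j then (a j - a lo) ^ p else 0) +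
          ∑ i ∈ univ.erase lo, ∑ j, if i < j then (a j - a i) ^ p else 0 := by
          rw [hrow_lo]
          gcongr with i
          exact hrow i
    _ = ∑ i, ∑ j, if i < j then (a j - a i) ^ p else 0 :=
          add_sum_erase _ (fun i => ∑ j, if i < j then (a j - a i) ^ p else 0) (mem_univ lo)

/-- for `0 < p ≤ 1`, `n ≥ 2`, and reals `a₁ ≤ a₂ ≤ … ≤ aₙ` with mean `m`,
one has `(n-1)(aₙ - m)^p ≤ ((n-1)/n)^p ∑_{i<j} (aⱼ - aᵢ)^p`. -/
theorem ordered_mean_deviation_inequality (p : ℝ) (hp0 : 0 < p) (hp1 : p ≤ 1)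
    (n : ℕ) (hn : 2 ≤ n) (a : Fin n → ℝ) (ha : Monotone a)
    (m : ℝ) (hm : m = (∑ i : Fin n, a i) / n) :
    ((n : ℝ) - 1) * (a ⟨n - 1, by omega⟩ - m) ^ p ≤
      (((n : ℝ) - 1) / n) ^ p *
        ∑ i : Fin n, ∑ j : Fin n, if i < j then (a j - a i) ^ p else 0 := by
  set hi : Fin n := ⟨n - 1, by omega⟩
  set lo : Fin n := ⟨0, by omega⟩
  have hlo : IsBot lo := fun i => Fin.le_def.2 (Nat.zero_le _)
  have hhi : IsTop hi := fun i => Fin.le_def.2 (by simp only [hi]; omega)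
  have hn1 : (0 : ℝ) ≤ n - 1 := by
    rw [sub_nonneg]
    exact_mod_cast (by omega : 1 ≤ n)
  have hmean : a hi - m = (∑ i, (a hi - a i)) / n := by
    rw [hm, sum_sub_distrib, sum_const, card_univ, Fintype.card_fin, nsmul_eq_mul]
    field_simp
  have hmean_nonneg : 0 ≤ a hi - m :=
    hmean ▸ div_nonneg (sum_nonneg fun i _ => sub_nonneg.2 (ha (hhi i))) n.cast_nonneg
  have hmean_le : a hi - m ≤ (n - 1) / n * (a hi - a lo) := by
    rw [hmean, div_mul_eq_mul_div]
    gcongr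
    simpa using sum_sub_le_card_sub_one_mul (fun i => ha (hlo i)) hi
  calc ((n : ℝ) - 1) * (a hi - m) ^ p ≤ (n - 1) * ((n - 1) / n * (a hi - a lo)) ^ p := by
        gcongr
    _ = ((n - 1) / n) ^ p * ((n - 1) * (a hi - a lo) ^ p) := by
        rw [Real.mul_rpow (by positivity) (sub_nonneg.2 (ha (hlo hi)))]
        ring
    _ ≤ _ := by
        gcongr
        simpa using card_sub_one_mul_rpow_le_sum_rpow_sub hp0 hp1 ha hlo hhi
end

section
/- Let 0 < p ≤ 1. Let a_1 ≤ a_2 ≤ a_3 ≤ a_4 be real numbers with mean m = (a_1 + a_2 + a_3 + a_4)/4, and assume a_2 ≤ m ≤ a_3. Then (3/4)^p · ( (a_4 − a_3)^p + (a_3 − a_2)^p + (a_2 − a_1)^p ) ≥ (a_4 − a_3)^p + (a_3 − m)^p. -/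
/-!
Write `x = a₄ - a₃`, `y = a₃ - a₂`, `z = a₂ - a₁`, so that `4 (a₃ - m) = 2y + z - x`. After
multiplying by `4^p` the claim becomes `(4x)^p + (2y + z - x)^p ≤ 3^p (x^p + y^p + z^p)`.
Subadditivity of `t ↦ t^p` bounds `(2y + z - x)^p` by `2^p y^p + z^p` when `x ≤ y` and by
`y^p + z^p` when `y ≤ x`; in the second case also `x^p ≤ 2^p y^p + z^p`. What remains are the
numerical inequalities `4^p + 2^p ≤ 3^p + 3^p` and `1 + 8^p ≤ 3^p + 6^p`, instances of Karamata's
inequality for the concave function `t ↦ t^p`.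
-/

open Real

theorem ConcaveOn.add_le_add_of_majorizes {s : Set ℝ} {f : ℝ → ℝ} (hf : ConcaveOn ℝ s f)
    {a b c d : ℝ} (ha : a ∈ s) (hd : d ∈ s) (hab : a ≤ b) (hac : a ≤ c) (hsum : a + d = b + c) :
    f a + f d ≤ f b + f c := by
  rcases (show a ≤ d by linarith).eq_or_lt with rfl | had
  · obtain rfl : b = a := by linarith
    obtain rfl : c = b := by linarith
    rfl
  obtain rfl : c = a + d - b := by linarith
  set t := (b - a) / (d - a)
  have htd : t * (d - a) = b - a := div_mul_cancel₀ _ (sub_pos.2 had).ne'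
  have ht0 : 0 ≤ t := div_nonneg (by linarith) (by linarith)
  have ht1 : 0 ≤ 1 - t := sub_nonneg.2 ((div_le_one (sub_pos.2 had)).2 (by linarith))
  have hb : (1 - t) * a + t * d = b := by linear_combination htd
  have hc : t * a + (1 - t) * d = a + d - b := by linear_combination -htd
  have h₁ := hf.2 ha hd ht1 ht0 (by ring)
  have h₂ := hf.2 ha hd ht0 ht1 (by ring)
  simp only [smul_eq_mul, hb, hc] at h₁ h₂
  linarith

namespace Real

variable {p y z : ℝ}

theorem rpow_add_rpow_le_of_majorizes (hp0 : 0 ≤ p) (hp1 : p ≤ 1) {a b c d : ℝ} (ha : 0 ≤ a)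
    (hab : a ≤ b) (hac : a ≤ c) (hsum : a + d = b + c) : a ^ p + d ^ p ≤ b ^ p + c ^ p :=
  (concaveOn_rpow hp0 hp1).add_le_add_of_majorizes ha
    (Set.mem_Ici.2 (by linarith)) hab hac hsum

theorem four_rpow_add_two_rpow_le (hp0 : 0 ≤ p) (hp1 : p ≤ 1) :
    (4 : ℝ) ^ p + 2 ^ p ≤ 2 * 3 ^ p := by
  have := rpow_add_rpow_le_of_majorizes hp0 hp1 (a := 2) (b := 3) (c := 3) (d := 4)
    (by norm_num) (by norm_num) (by norm_num) (by norm_num)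
  linarith

theorem one_add_eight_rpow_le (hp0 : 0 ≤ p) (hp1 : p ≤ 1) :
    1 + (8 : ℝ) ^ p ≤ 3 ^ p + 6 ^ p := by
  simpa using rpow_add_rpow_le_of_majorizes hp0 hp1 (a := 1) (b := 3) (c := 6) (d := 8)
    (by norm_num) (by norm_num) (by norm_num) (by norm_num)

theorem rpow_two_mul_add_le (hp0 : 0 ≤ p) (hp1 : p ≤ 1) (hy : 0 ≤ y) (hz : 0 ≤ z) :
    (2 * y + z) ^ p ≤ 2 ^ p * y ^ p + z ^ p := by
  rw [← mul_rpow zero_le_two hy]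
  exact rpow_add_le_add_rpow (by positivity) hz hp0 hp1

end Real

section LineInequality

variable {p x y z : ℝ}

theorem line_inequality_scaled_of_le (hp0 : 0 ≤ p) (hp1 : p ≤ 1) (hx : 0 ≤ x) (hz : 0 ≤ z)
    (hxy : x ≤ y) :
    4 ^ p * x ^ p + (2 * y + z - x) ^ p ≤ 3 ^ p * (x ^ p + y ^ p + z ^ p) := by
  have hy : 0 ≤ y := hx.trans hxy
  have hrest : (2 * y + z - x) ^ p ≤ 2 ^ p * y ^ p + z ^ p :=
    (rpow_le_rpow (by linarith) (by linarith) hp0).trans (rpow_two_mul_add_le hp0 hp1 hy hz)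
  have h34 : (3 : ℝ) ^ p ≤ 4 ^ p := rpow_le_rpow (by norm_num) (by norm_num) hp0
  have hx_y : (4 ^ p - 3 ^ p) * x ^ p ≤ (3 ^ p - 2 ^ p) * y ^ p :=
    calc (4 ^ p - 3 ^ p) * x ^ p ≤ (4 ^ p - 3 ^ p) * y ^ p :=
          mul_le_mul_of_nonneg_left (rpow_le_rpow hx hxy hp0) (sub_nonneg.2 h34)
      _ ≤ (3 ^ p - 2 ^ p) * y ^ p :=
          mul_le_mul_of_nonneg_right (by linarith [four_rpow_add_two_rpow_le hp0 hp1])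
            (rpow_nonneg hy p)
  have hz_z : z ^ p ≤ 3 ^ p * z ^ p :=
    le_mul_of_one_le_left (rpow_nonneg hz p) (one_le_rpow (by norm_num) hp0)
  linarith

theorem line_inequality_scaled_of_ge (hp0 : 0 ≤ p) (hp1 : p ≤ 1) (hy : 0 ≤ y) (hz : 0 ≤ z)
    (hyx : y ≤ x) (hx : x ≤ 2 * y + z) :
    4 ^ p * x ^ p + (2 * y + z - x) ^ p ≤ 3 ^ p * (x ^ p + y ^ p + z ^ p) := by
  have hrest : (2 * y + z - x) ^ p ≤ y ^ p + z ^ p :=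
    (rpow_le_rpow (by linarith) (by linarith) hp0).trans (rpow_add_le_add_rpow hy hz hp0 hp1)
  have hxp : x ^ p ≤ 2 ^ p * y ^ p + z ^ p :=
    (rpow_le_rpow (by linarith) hx hp0).trans (rpow_two_mul_add_le hp0 hp1 hy hz)
  have h34 : (3 : ℝ) ^ p ≤ 4 ^ p := rpow_le_rpow (by norm_num) (by norm_num) hp0
  have h12 : (1 : ℝ) ≤ 2 ^ p := one_le_rpow (by norm_num) hp0
  have h8 : (8 : ℝ) ^ p = 4 ^ p * 2 ^ p := by rw [← mul_rpow] <;> norm_num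
  have h6 : (6 : ℝ) ^ p = 3 ^ p * 2 ^ p := by rw [← mul_rpow] <;> norm_num
  have hx_yz : (4 ^ p - 3 ^ p) * x ^ p ≤ (3 ^ p - 1) * y ^ p + (3 ^ p - 1) * z ^ p :=
    calc (4 ^ p - 3 ^ p) * x ^ p ≤ (4 ^ p - 3 ^ p) * (2 ^ p * y ^ p + z ^ p) :=
          mul_le_mul_of_nonneg_left hxp (sub_nonneg.2 h34)
      _ = (8 ^ p - 6 ^ p) * y ^ p + (4 ^ p - 3 ^ p) * z ^ p := by rw [h8, h6]; ring
      _ ≤ (3 ^ p - 1) * y ^ p + (3 ^ p - 1) * z ^ p := by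
          have h8y : 8 ^ p - 6 ^ p ≤ (3 : ℝ) ^ p - 1 := by
            linarith [one_add_eight_rpow_le hp0 hp1]
          have h4z : 4 ^ p - 3 ^ p ≤ (3 : ℝ) ^ p - 1 := by
            linarith [four_rpow_add_two_rpow_le hp0 hp1]
          gcongr ?_ * _ + ?_ * _
  linarith

theorem line_inequality_scaled (hp0 : 0 ≤ p) (hp1 : p ≤ 1) (hx0 : 0 ≤ x) (hy : 0 ≤ y)
    (hz : 0 ≤ z) (hx : x ≤ 2 * y + z) :
    4 ^ p * x ^ p + (2 * y + z - x) ^ p ≤ 3 ^ p * (x ^ p + y ^ p + z ^ p) := by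
  rcases le_total x y with hxy | hyx
  · exact line_inequality_scaled_of_le hp0 hp1 hx0 hz hxy
  · exact line_inequality_scaled_of_ge hp0 hp1 hy hz hyx hx

end LineInequality

theorem k4_case_r_eq_three_line_inequality_general (p : ℝ) (hp0 : 0 < p) (hp1 : p ≤ 1)
    (a1 a2 a3 a4 : ℝ) (h12 : a1 ≤ a2) (h23 : a2 ≤ a3) (h34 : a3 ≤ a4)
    (m : ℝ) (hm : m = (a1 + a2 + a3 + a4) / 4) (hm3 : m ≤ a3) :
    (a4 - a3) ^ p + (a3 - m) ^ p ≤
      (3 / 4 : ℝ) ^ p * ((a4 - a3) ^ p + (a3 - a2) ^ p + (a2 - a1) ^ p) := by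
  have key := line_inequality_scaled hp0.le hp1 (x := a4 - a3) (y := a3 - a2) (z := a2 - a1)
    (by linarith) (by linarith) (by linarith) (by linarith)
  have h4m : 2 * (a3 - a2) + (a2 - a1) - (a4 - a3) = 4 * (a3 - m) := by rw [hm]; ring
  rw [h4m, mul_rpow (by norm_num) (by linarith)] at key
  rw [div_rpow (by norm_num) (by norm_num), div_mul_eq_mul_div,
    le_div_iff₀ (by positivity)]
  linarith

/-- key inequality for the case `r = 3` of the sharp `p`-variation bound
on `K₄`, `0 < p ≤ 1`. -/
theorem k4_case_r_eq_three_line_inequality (p : ℝ) (hp0 : 0 < p) (hp1 : p ≤ 1)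
    (a1 a2 a3 a4 : ℝ) (h12 : a1 ≤ a2) (h23 : a2 ≤ a3) (h34 : a3 ≤ a4)
    (m : ℝ) (hm : m = (a1 + a2 + a3 + a4) / 4) (h2m : a2 ≤ m) (hm3 : m ≤ a3) :
    (a4 - a3) ^ p + (a3 - m) ^ p ≤
      (3 / 4 : ℝ) ^ p * ((a4 - a3) ^ p + (a3 - a2) ^ p + (a2 - a1) ^ p) :=
  k4_case_r_eq_three_line_inequality_general p hp0 hp1 a1 a2 a3 a4 h12 h23 h34 m hm hm3
end

section
/- Let 0 < p ≤ 1. Let a_1 ≤ a_2 ≤ a_3 ≤ a_4 be real numbers with mean m = (a_1 + a_2 + a_3 + a_4)/4, and assume a_2 ≤ m ≤ a_3. Then (3/4)^p · ( (a_4 − a_2)^p + (a_3 − a_1)^p ) ≥ (a_4 − m)^p + (a_3 − m)^p. -/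
/-- Four-point concavity inequality for `t ↦ t^p`, `0 < p ≤ 1`. -/
lemma rpow_four_point (p : ℝ) (hp0 : 0 < p) (hp1 : p ≤ 1) {x y t : ℝ}
    (hy : 0 ≤ y) (hyx : y ≤ x) (ht : 0 ≤ t) :
    y ^ p + (x + t) ^ p ≤ x ^ p + (y + t) ^ p := by
  have hx : 0 ≤ x := hy.trans hyx
  rcases eq_or_lt_of_le ht with h0 | htpos
  · simp [← h0]
    linarith [le_refl (x ^ p + y ^ p)]
  · have hd : 0 < x + t - y := by linarith
    set l : ℝ := t / (x + t - y) with hl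
    have hl0 : 0 ≤ l := div_nonneg ht hd.le
    have hl1 : l ≤ 1 := by
      rw [hl, div_le_one hd]; linarith
    have hld : l * (x + t - y) = t := div_mul_cancel₀ _ hd.ne'
    have hmem1 : y ∈ Set.Ici (0 : ℝ) := hy
    have hmem2 : x + t ∈ Set.Ici (0 : ℝ) := by simp; linarith
    have hcc := Real.concaveOn_rpow hp0.le hp1
    have h1 := hcc.2 hmem1 hmem2 hl0 (by linarith : (0:ℝ) ≤ 1 - l) (by ring)
    have h2 := hcc.2 hmem1 hmem2 (by linarith : (0:ℝ) ≤ 1 - l) hl0 (by ring)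
    simp only [smul_eq_mul] at h1 h2
    have e1 : l * y + (1 - l) * (x + t) = x := by linear_combination -hld
    have e2 : (1 - l) * y + l * (x + t) = y + t := by linear_combination hld
    rw [e1] at h1
    rw [e2] at h2
    nlinarith [h1, h2]

/-- `(7/4)^p + (3/4)^p ≥ 2` for `0 < p`. -/
lemma rpow_seven_three (p : ℝ) (hp0 : 0 < p) :
    (2 : ℝ) ≤ (7 / 4 : ℝ) ^ p + (3 / 4 : ℝ) ^ p := by
  have h7 : (1 : ℝ) ≤ (7 / 4 : ℝ) ^ p := Real.one_le_rpow (by norm_num) hp0.le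
  have h3 : (3 / 4 : ℝ) ^ p ≤ 1 := Real.rpow_le_one (by norm_num) (by norm_num) hp0.le
  have hprod : (1 : ℝ) ≤ (7 / 4 : ℝ) ^ p * (3 / 4 : ℝ) ^ p := by
    rw [← Real.mul_rpow (by norm_num) (by norm_num)]
    exact Real.one_le_rpow (by norm_num) hp0.le
  nlinarith [mul_nonneg (sub_nonneg.2 h7) (sub_nonneg.2 h3)]

/-- Endpoint inequality: `x^p + y^p ≤ ((3/4)x)^p + ((3/4)x + (3/2)y)^p`. -/
lemma rpow_endpoint_one (p : ℝ) (hp0 : 0 < p) (hp1 : p ≤ 1) {x y : ℝ}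
    (hy : 0 ≤ y) (hyx : y ≤ x) :
    x ^ p + y ^ p ≤ (3 / 4 * x) ^ p + (3 / 4 * x + 3 / 2 * y) ^ p := by
  have hx : 0 ≤ x := hy.trans hyx
  have h4 := rpow_four_point p hp0 hp1 hy hyx
    (t := 3 / 4 * x + 1 / 2 * y) (by linarith)
  rw [show x + (3 / 4 * x + 1 / 2 * y) = 7 / 4 * x + 1 / 2 * y by ring,
      show y + (3 / 4 * x + 1 / 2 * y) = 3 / 4 * x + 3 / 2 * y by ring] at h4
  have hmono : (7 / 4 * x) ^ p ≤ (7 / 4 * x + 1 / 2 * y) ^ p :=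
    Real.rpow_le_rpow (by linarith) (by linarith) hp0.le
  have hs1 : (7 / 4 * x) ^ p = (7 / 4 : ℝ) ^ p * x ^ p :=
    Real.mul_rpow (by norm_num) hx
  have hs2 : (3 / 4 * x) ^ p = (3 / 4 : ℝ) ^ p * x ^ p :=
    Real.mul_rpow (by norm_num) hx
  have hxp : 0 ≤ x ^ p := Real.rpow_nonneg hx p
  have hc := mul_le_mul_of_nonneg_right (rpow_seven_three p hp0) hxp
  rw [add_mul] at hc
  rw [hs2]
  rw [hs1] at hmono
  linarith

/-- Abstract form of the crossed-pairs inequality. -/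
lemma rpow_cross_key (p : ℝ) (hp0 : 0 < p) (hp1 : p ≤ 1) {x y X Y : ℝ}
    (hy : 0 ≤ y) (hyx : y ≤ x)
    (hAX : 3 / 4 * x ≤ X) (hXC : X ≤ (9 * x + 3 * y) / 8)
    (hS : X + Y = 3 / 2 * (x + y)) :
    x ^ p + y ^ p ≤ X ^ p + Y ^ p := by
  have hx : 0 ≤ x := hy.trans hyx
  rcases eq_or_lt_of_le hx with h0 | hxpos
  · -- x = 0, hence y = 0, X = 0, Y = 0
    have hx0 : x = 0 := h0.symm
    have hy0 : y = 0 := le_antisymm (hx0 ▸ hyx) hy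
    have hX0 : X = 0 := by
      have : X ≤ 0 := by rw [hx0, hy0] at hXC; linarith
      linarith [hAX, hx0 ▸ (by linarith : (0:ℝ) ≤ 3/4 * x)]
    have hY0 : Y = 0 := by rw [hX0, hx0, hy0] at hS; linarith
    rw [hx0, hy0, hX0, hY0]
  · set A : ℝ := 3 / 4 * x with hA
    set C : ℝ := (9 * x + 3 * y) / 8 with hC
    set B : ℝ := 3 / 4 * x + 3 / 2 * y with hB
    set D : ℝ := (3 * x + 9 * y) / 8 with hD
    have hCA : 0 < C - A := by rw [hC, hA]; linarith
    set c : ℝ := (X - A) / (C - A) with hc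
    have hc0 : 0 ≤ c := div_nonneg (by linarith) hCA.le
    have hc1 : c ≤ 1 := by rw [hc, div_le_one hCA]; linarith [hXC]
    have hcd : c * (C - A) = X - A := div_mul_cancel₀ _ hCA.ne'
    have e1 : (1 - c) * A + c * C = X := by linear_combination hcd
    have e2 : (1 - c) * B + c * D = Y := by
      rw [hB, hD]; rw [hA, hC] at e1; linear_combination -e1 - hS
    have hcc := Real.concaveOn_rpow hp0.le hp1
    have hAm : A ∈ Set.Ici (0 : ℝ) := by simp [hA]; linarith
    have hCm : C ∈ Set.Ici (0 : ℝ) := by simp [hC]; linarith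
    have hBm : B ∈ Set.Ici (0 : ℝ) := by simp [hB]; linarith
    have hDm : D ∈ Set.Ici (0 : ℝ) := by simp [hD]; linarith
    have h1c : (0:ℝ) ≤ 1 - c := by linarith
    have habc : (1 - c) + c = 1 := by ring
    have hX := hcc.2 hAm hCm h1c hc0 habc
    have hY := hcc.2 hBm hDm h1c hc0 habc
    simp only [smul_eq_mul] at hX hY
    rw [e1] at hX
    rw [e2] at hY
    have hE1 : x ^ p + y ^ p ≤ A ^ p + B ^ p :=
      rpow_endpoint_one p hp0 hp1 hy hyx
    have hE2 : x ^ p + y ^ p ≤ C ^ p + D ^ p := by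
      have hxC : x ^ p ≤ C ^ p :=
        Real.rpow_le_rpow hx (by rw [hC]; linarith) hp0.le
      have hyD : y ^ p ≤ D ^ p :=
        Real.rpow_le_rpow hy (by rw [hD]; linarith) hp0.le
      linarith
    nlinarith [mul_le_mul_of_nonneg_left hE1 h1c, mul_le_mul_of_nonneg_left hE2 hc0]

/-- key inequality for the case `r = 3` of the sharp `p`-variation bound
on `K₄`, `0 < p ≤ 1` (the "crossed pairs" inequality). -/
theorem k4_case_r_eq_three_cross_inequality (p : ℝ) (hp0 : 0 < p) (hp1 : p ≤ 1)
    (a1 a2 a3 a4 : ℝ) (h12 : a1 ≤ a2) (h23 : a2 ≤ a3) (h34 : a3 ≤ a4)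
    (m : ℝ) (hm : m = (a1 + a2 + a3 + a4) / 4) (h2m : a2 ≤ m) (hm3 : m ≤ a3) :
    (a4 - m) ^ p + (a3 - m) ^ p ≤
      (3 / 4 : ℝ) ^ p * ((a4 - a2) ^ p + (a3 - a1) ^ p) := by
  have h42 : (0:ℝ) ≤ a4 - a2 := by linarith
  have h31 : (0:ℝ) ≤ a3 - a1 := by linarith
  rw [mul_add, ← Real.mul_rpow (by norm_num) h42, ← Real.mul_rpow (by norm_num) h31]
  exact rpow_cross_key p hp0 hp1 (by linarith) (by linarith)
    (by linarith) (by rw [hm]; linarith) (by rw [hm]; ring)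
end

section
/- Let p be a real number with log(4)/log(6) ≤ p ≤ 1, and let n, r be integers with n ≥ 3 and 2 ≤ r ≤ n − 1. Let x_{r+1}, …, x_n ≥ 0, u ≥ 0, and y_1, …, y_{r−1} be real numbers with y_i ≥ u for every 1 ≤ i ≤ r−1, and suppose Σ_{i=r+1}^{n} x_i + n·u = Σ_{i=1}^{r−1} y_i. Then Σ_{i=r+1}^{n} x_i^p + (r−1)·u^p ≤ (1 − 1/n)^p · ( Σ_{i=r+1}^{n} x_i^p + Σ_{i=1}^{r−1} y_i^p ). -/
/-!
Write `M = n - r` and `K = r - 1` for the numbers of `x`'s and `y`'s and `X = ∑ x i`.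
Concavity of `t ↦ t ^ p` gives `∑ x i ^ p ≤ M ^ (1 - p) * X ^ p` (Jensen) and, since the increments
of a concave function decrease, `∑ y i ^ p ≥ (X + (M + 2) * u) ^ p + (K - 1) * u ^ p`, the `y i`
being `u` shifted by nonnegative amounts adding up to `X + (M + 1) * u`. As `1 - 1 / n` is at most
`(1 - 1 / n) ^ p`, it suffices to prove the claim with the factor `1 - 1 / n`; by Hölder's
inequality `M ^ (1 - p) * a ^ p + K ^ (1 - p) * b ^ p ≤ (M + K) ^ (1 - p) * (a + b) ^ p` this
reduces to the numerical inequality `M + 2 * K + 1 ≤ (M + K) ^ p * K ^ (1 - p) * (M + 2) ^ p`.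
As `M + 2 * K + 1 ≤ 2 * (M + K)` and `M + K ≤ K * (M + 1)`, that follows from
`2 * (M + 1) ≤ ((M + 1) * (M + 2)) ^ p`, which for `M = 1` is `4 ≤ 6 ^ p`: this is where the
threshold `log 4 / log 6` comes from.
-/

open Finset Real

theorem ConcaveOn.map_add_add_map_le {f : ℝ → ℝ} {u a b : ℝ} (hf : ConcaveOn ℝ (Set.Ici u) f)
    (ha : 0 ≤ a) (hb : 0 ≤ b) : f (u + a + b) + f u ≤ f (u + a) + f (u + b) := by
  rcases (add_nonneg ha hb).eq_or_lt with hab | hab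
  · obtain rfl : a = 0 := by linarith
    obtain rfl : b = 0 := by linarith
    simp
  have hu : u ∈ Set.Ici u := Set.mem_Ici.2 le_rfl
  have hv : u + a + b ∈ Set.Ici u := Set.mem_Ici.2 (by linarith)
  set l := a / (a + b)
  have hl : b / (a + b) = 1 - l := by simp only [l]; field_simp; ring
  have hl0 : 0 ≤ l := div_nonneg ha hab.le
  have hl1 : 0 ≤ 1 - l := hl ▸ div_nonneg hb hab.le
  -- `u + a` and `u + b` are the convex combinations of `u` and `u + a + b` with weights swapped
  have h₁ := hf.2 hu hv hl1 hl0 (by ring)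
  have h₂ := hf.2 hu hv hl0 hl1 (by ring)
  have e₁ : (1 - l) • u + l • (u + a + b) = u + a := by
    simp only [smul_eq_mul, l]; field_simp; ring
  have e₂ : l • u + (1 - l) • (u + a + b) = u + b := by
    simp only [smul_eq_mul, l]; field_simp; ring
  rw [e₁] at h₁
  rw [e₂] at h₂
  simp only [smul_eq_mul] at h₁ h₂
  linarith

theorem ConcaveOn.map_add_sum_add_card_mul_le {ι : Type*} {f : ℝ → ℝ} {u : ℝ}
    (hf : ConcaveOn ℝ (Set.Ici u) f) {s : Finset ι} (hs : s.Nonempty) {z : ι → ℝ}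
    (hz : ∀ i ∈ s, 0 ≤ z i) :
    f (u + ∑ i ∈ s, z i) + (#s - 1 : ℝ) * f u ≤ ∑ i ∈ s, f (u + z i) := by
  induction hs using Finset.Nonempty.cons_induction with
  | singleton a => simp
  | cons a s ha hs ih =>
    rw [forall_mem_cons] at hz
    rw [sum_cons, sum_cons, card_cons, Nat.cast_succ, ← add_assoc]
    have := hf.map_add_add_map_le hz.1 (sum_nonneg hz.2)
    linarith [ih hz.2]

theorem Real.sum_rpow_one_sub_mul_rpow_le {ι : Type*} (s : Finset ι) {p : ℝ} (hp0 : 0 ≤ p)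
    (hp1 : p ≤ 1) {w a : ι → ℝ} (hw : ∀ i ∈ s, 0 < w i) (ha : ∀ i ∈ s, 0 ≤ a i) :
    ∑ i ∈ s, w i ^ (1 - p) * a i ^ p ≤ (∑ i ∈ s, w i) ^ (1 - p) * (∑ i ∈ s, a i) ^ p := by
  rcases s.eq_empty_or_nonempty with rfl | hs
  · simp only [sum_empty]
    positivity
  set W := ∑ i ∈ s, w i
  have hW : 0 < W := sum_pos hw hs
  -- Jensen for `x ↦ x ^ p` at the points `a i / w i` with weights `w i / W`
  have h := (concaveOn_rpow hp0 hp1).le_map_sum (t := s) (w := fun i => w i / W)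
    (p := fun i => a i / w i) (fun i hi => (div_pos (hw i hi) hW).le)
    (by rw [← sum_div, div_self hW.ne']) (fun i hi => div_nonneg (ha i hi) (hw i hi).le)
  simp only [smul_eq_mul] at h
  have hl : ∀ i ∈ s, w i / W * (a i / w i) ^ p = W⁻¹ * (w i ^ (1 - p) * a i ^ p) := by
    intro i hi
    have := hw i hi
    rw [div_rpow (ha i hi) this.le, rpow_sub this, rpow_one]
    field_simp
  have hr : ∑ i ∈ s, w i / W * (a i / w i) = (∑ i ∈ s, a i) / W := by
    rw [sum_div]
    refine sum_congr rfl fun i hi => ?_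
    have := hw i hi
    field_simp
  rw [sum_congr rfl hl, ← mul_sum, hr, div_rpow (sum_nonneg ha) hW.le,
    inv_mul_le_iff₀ hW] at h
  rw [rpow_sub hW, rpow_one]
  have := rpow_pos_of_pos hW p
  calc _ ≤ W * ((∑ i ∈ s, a i) ^ p / W ^ p) := h
    _ = _ := by field_simp

theorem Real.sum_rpow_le_card_rpow_mul {ι : Type*} (s : Finset ι) {p : ℝ} (hp0 : 0 ≤ p)
    (hp1 : p ≤ 1) {a : ι → ℝ} (ha : ∀ i ∈ s, 0 ≤ a i) :
    ∑ i ∈ s, a i ^ p ≤ (#s : ℝ) ^ (1 - p) * (∑ i ∈ s, a i) ^ p := by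
  simpa using sum_rpow_one_sub_mul_rpow_le s hp0 hp1 (w := 1) (fun _ _ => one_pos) ha

theorem three_quarters_le_log_four_div_log_six : (3 : ℝ) / 4 ≤ log 4 / log 6 := by
  rw [div_le_div_iff₀ (by norm_num) (log_pos (by norm_num))]
  have h := log_le_log (by norm_num) (show (6 : ℝ) ^ 3 ≤ 4 ^ 4 by norm_num)
  rw [log_pow, log_pow] at h
  push_cast at h
  linarith

theorem four_le_six_rpow {p : ℝ} (hp : log 4 / log 6 ≤ p) : (4 : ℝ) ≤ 6 ^ p :=
  calc (4 : ℝ) = 6 ^ logb 6 4 := (rpow_logb (by norm_num) (by norm_num) (by norm_num)).symm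
    _ ≤ 6 ^ p := rpow_le_rpow_of_exponent_le (by norm_num) hp

theorem two_mul_le_mul_add_one_rpow {p t : ℝ} (hp : log 4 / log 6 ≤ p) (ht : 2 ≤ t) :
    2 * t ≤ (t * (t + 1)) ^ p := by
  set x := t * (t + 1) / 6
  have hx : 1 ≤ x := by simp only [x]; rw [le_div_iff₀ (by norm_num)]; nlinarith
  -- `4 ≤ 6 ^ p` covers the factor `6`, and `p ≥ 3 / 4` the factor `x ≥ 1`
  have hx4 : (t / 2) ^ 4 ≤ (x ^ ((3 : ℝ) / 4)) ^ 4 := by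
    have h27 : 27 * t ≤ 2 * (t + 1) ^ 3 := by
      nlinarith [mul_nonneg (sub_nonneg.2 ht) (by nlinarith : (0 : ℝ) ≤ 2 * t ^ 2 + 10 * t - 1)]
    have := mul_le_mul_of_nonneg_left h27 (by positivity : (0 : ℝ) ≤ t ^ 3)
    rw [← rpow_mul_natCast (by linarith), show (3 : ℝ) / 4 * (4 : ℕ) = (3 : ℕ) by norm_num,
      rpow_natCast, div_pow, div_pow, div_le_div_iff₀ (by norm_num) (by norm_num)]
    nlinarith
  have hx34 : t / 2 ≤ x ^ ((3 : ℝ) / 4) :=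
    (pow_le_pow_iff_left₀ (by positivity) (by positivity) (by norm_num)).1 hx4
  calc 2 * t = 4 * (t / 2) := by ring
    _ ≤ 6 ^ p * x ^ p := by
      gcongr
      · exact four_le_six_rpow hp
      · exact hx34.trans (rpow_le_rpow_of_exponent_le hx
          (three_quarters_le_log_four_div_log_six.trans hp))
    _ = (t * (t + 1)) ^ p := by
      rw [← mul_rpow (by norm_num) (by positivity)]
      simp only [x]
      ring_nf

theorem add_two_mul_add_one_le_rpow {p M K : ℝ} (hp : log 4 / log 6 ≤ p) (hp1 : p ≤ 1)
    (hM : 1 ≤ M) (hK : 1 ≤ K) :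
    M + 2 * K + 1 ≤ (M + K) ^ p * K ^ (1 - p) * (M + 2) ^ p := by
  have hp0 : 0 ≤ p := (three_quarters_le_log_four_div_log_six.trans hp).trans' (by norm_num)
  have e : (M + 1) ^ (1 - p) * (M + 1) ^ p = M + 1 := by
    rw [← rpow_add (by positivity), sub_add_cancel, rpow_one]
  have h₁ : M + K ≤ (M + K) ^ p * (K * (M + 1)) ^ (1 - p) :=
    calc M + K = (M + K) ^ p * (M + K) ^ (1 - p) := by
          rw [← rpow_add (by positivity), add_sub_cancel, rpow_one]
      _ ≤ _ := by gcongr; nlinarith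
  have h₂ := two_mul_le_mul_add_one_rpow hp (show 2 ≤ M + 1 by linarith)
  rw [add_assoc, one_add_one_eq_two] at h₂
  have h₃ : (M + K) * (2 * (M + 1)) ≤
      (M + K) ^ p * K ^ (1 - p) * (M + 2) ^ p * ((M + 1) ^ (1 - p) * (M + 1) ^ p) :=
    calc _ ≤ (M + K) ^ p * (K * (M + 1)) ^ (1 - p) * ((M + 1) * (M + 2)) ^ p :=
          mul_le_mul h₁ h₂ (by positivity) (by positivity)
      _ = _ := by rw [mul_rpow (by positivity) (by positivity),
          mul_rpow (by positivity) (by positivity)]; ring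
  rw [e] at h₃
  nlinarith

theorem add_mul_rpow_le_mul_add_mul_rpow {p M K u X S : ℝ} (hp0 : 0 ≤ p) (hp1 : p ≤ 1)
    (hM : 1 ≤ M) (hK : 1 ≤ K) (hu : 0 ≤ u) (hX : 0 ≤ X) (hS : S ≤ M ^ (1 - p) * X ^ p)
    (hc : M + 2 * K + 1 ≤ (M + K) ^ p * K ^ (1 - p) * (M + 2) ^ p) :
    S + (M + 2 * K + 1) * u ^ p ≤ (M + K) * (X + (M + 2) * u) ^ p := by
  have hM₀ : 0 < M := by linarith
  have hK₀ : 0 < K := by linarith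
  have hZ : 0 ≤ (M + 2) * u := by positivity
  have hHolder := sum_rpow_one_sub_mul_rpow_le univ hp0 hp1 (w := ![M, K])
    (a := ![X, (M + 2) * u]) (by simp [Fin.forall_fin_two, hM₀, hK₀])
    (by simp [Fin.forall_fin_two, hX, hZ])
  simp only [Fin.sum_univ_two, Matrix.cons_val_zero, Matrix.cons_val_one] at hHolder
  rw [mul_rpow (by linarith) hu] at hHolder
  have hMK : 1 ≤ (M + K) ^ p := one_le_rpow (by linarith) hp0
  calc S + (M + 2 * K + 1) * u ^ p
      ≤ M ^ (1 - p) * X ^ p + (M + K) ^ p * K ^ (1 - p) * (M + 2) ^ p * u ^ p := by gcongr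
    _ ≤ (M + K) ^ p * (M ^ (1 - p) * X ^ p + K ^ (1 - p) * ((M + 2) ^ p * u ^ p)) := by
        have : 0 ≤ M ^ (1 - p) * X ^ p := by positivity
        nlinarith
    _ ≤ (M + K) ^ p * ((M + K) ^ (1 - p) * (X + (M + 2) * u) ^ p) := by gcongr
    _ = (M + K) * (X + (M + 2) * u) ^ p := by
        rw [← mul_assoc, ← rpow_add (by linarith), add_sub_cancel, rpow_one]

theorem add_mul_rpow_le_one_sub_one_div_rpow_mul {p M K N u X S T : ℝ} (hp0 : 0 ≤ p)
    (hp1 : p ≤ 1) (hM : 1 ≤ M) (hK : 1 ≤ K) (hN : N = M + K + 1) (hu : 0 ≤ u) (hX : 0 ≤ X)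
    (hS₀ : 0 ≤ S) (hS : S ≤ M ^ (1 - p) * X ^ p)
    (hc : M + 2 * K + 1 ≤ (M + K) ^ p * K ^ (1 - p) * (M + 2) ^ p)
    (hT : (X + (M + 2) * u) ^ p + (K - 1) * u ^ p ≤ T) :
    S + K * u ^ p ≤ (1 - 1 / N) ^ p * (S + T) := by
  have hW := add_mul_rpow_le_mul_add_mul_rpow hp0 hp1 hM hK hu hX hS hc
  have hN₀ : 0 < N := by linarith
  have hc₀ : 0 ≤ 1 - 1 / N := by rw [sub_nonneg, div_le_one hN₀]; linarith
  have hcp : 1 - 1 / N ≤ (1 - 1 / N) ^ p :=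
    self_le_rpow_of_le_one hc₀ (by simp [hN₀.le]) hp1
  have hV : 0 ≤ u ^ p := by positivity
  have hWp : 0 ≤ (X + (M + 2) * u) ^ p := by positivity
  calc S + K * u ^ p ≤ (1 - 1 / N) * (S + T) := by
        rw [one_sub_div hN₀.ne', div_mul_eq_mul_div, le_div_iff₀ hN₀, hN]
        nlinarith [mul_le_mul_of_nonneg_left hT (by linarith : 0 ≤ M + K)]
    _ ≤ (1 - 1 / N) ^ p * (S + T) := by gcongr; nlinarith

theorem kn_induction_key_inequality_general (p : ℝ)
    (hp0 : Real.log 4 / Real.log 6 ≤ p) (hp1 : p ≤ 1)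
    (n r : ℕ) (hr : 2 ≤ r) (hrn : r ≤ n - 1)
    (x y : ℕ → ℝ) (u : ℝ) (hu : 0 ≤ u)
    (hx : ∀ i ∈ Finset.Icc (r + 1) n, 0 ≤ x i)
    (hy : ∀ i ∈ Finset.Icc 1 (r - 1), u ≤ y i)
    (hsum : ∑ i ∈ Finset.Icc (r + 1) n, x i + (n : ℝ) * u =
      ∑ i ∈ Finset.Icc 1 (r - 1), y i) :
    ∑ i ∈ Finset.Icc (r + 1) n, x i ^ p + ((r : ℝ) - 1) * u ^ p ≤
      (1 - 1 / (n : ℝ)) ^ p *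
        (∑ i ∈ Finset.Icc (r + 1) n, x i ^ p + ∑ i ∈ Finset.Icc 1 (r - 1), y i ^ p) := by
  have hp : 0 ≤ p := (three_quarters_le_log_four_div_log_six.trans hp0).trans' (by norm_num)
  have hM₁ : (1 : ℝ) ≤ n - r := by
    have : (r : ℝ) + 1 ≤ n := by exact_mod_cast (by omega : r + 1 ≤ n)
    linarith
  have hK₁ : (1 : ℝ) ≤ r - 1 := by
    have : (2 : ℝ) ≤ r := by exact_mod_cast hr
    linarith
  have hM : (#(Icc (r + 1) n) : ℝ) = n - r := by
    rw [Nat.card_Icc, Nat.add_sub_add_right, Nat.cast_sub (by omega)]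
  have hK : (#(Icc 1 (r - 1)) : ℝ) = r - 1 := by
    rw [Nat.card_Icc, Nat.add_sub_cancel, Nat.cast_sub (by omega), Nat.cast_one]
  have hS := sum_rpow_le_card_rpow_mul _ hp hp1 hx
  rw [hM] at hS
  have hT := ((concaveOn_rpow hp hp1).subset (Set.Ici_subset_Ici.2 hu) (convex_Ici u))
    |>.map_add_sum_add_card_mul_le (nonempty_Icc.2 (by omega)) (z := fun i => y i - u)
      fun i hi => sub_nonneg.2 (hy i hi)
  simp only [add_sub_cancel, sum_sub_distrib, sum_const, nsmul_eq_mul, hK, ← hsum] at hT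
  refine add_mul_rpow_le_one_sub_one_div_rpow_mul hp hp1 hM₁ hK₁ (by ring) hu (sum_nonneg hx)
    (sum_nonneg fun i hi => rpow_nonneg (hx i hi) p) hS
    (add_two_mul_add_one_le_rpow hp0 hp1 hM₁ hK₁) ?_
  convert hT using 3
  ring

/-- the key inequality controlling the contribution of the smallest
vertex value above the mean, in the induction proving the sharp `p`-variation bound on
the complete graph `K_n` for `log 4 / log 6 ≤ p ≤ 1`. -/
theorem kn_induction_key_inequality (p : ℝ)
    (hp0 : Real.log 4 / Real.log 6 ≤ p) (hp1 : p ≤ 1)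
    (n r : ℕ) (hn : 3 ≤ n) (hr : 2 ≤ r) (hrn : r ≤ n - 1)
    (x y : ℕ → ℝ) (u : ℝ) (hu : 0 ≤ u)
    (hx : ∀ i ∈ Finset.Icc (r + 1) n, 0 ≤ x i)
    (hy : ∀ i ∈ Finset.Icc 1 (r - 1), u ≤ y i)
    (hsum : ∑ i ∈ Finset.Icc (r + 1) n, x i + (n : ℝ) * u =
      ∑ i ∈ Finset.Icc 1 (r - 1), y i) :
    ∑ i ∈ Finset.Icc (r + 1) n, x i ^ p + ((r : ℝ) - 1) * u ^ p ≤
      (1 - 1 / (n : ℝ)) ^ p *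
        (∑ i ∈ Finset.Icc (r + 1) n, x i ^ p + ∑ i ∈ Finset.Icc 1 (r - 1), y i ^ p) :=
  kn_induction_key_inequality_general p hp0 hp1 n r hr hrn x y u hu hx hy hsum
end

section
/- Let 0 < p ≤ 1 and let n ≥ 3 be an integer. Let x_2, …, x_{n−1} ≥ 0 and u ≥ 0 be real numbers. Then Σ_{i=2}^{n−1} x_i^p + u^p ≤ ((n−1)/n)^p · ( Σ_{i=2}^{n−1} x_i^p + ( Σ_{i=2}^{n−1} x_i + n·u )^p ). -/
/-!
Multiplying by `n ^ p`, the claim reads `(n^p - (n-1)^p) · Σ x_i^p + (n u)^p ≤ (n-1)^p T^p` with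
`T = Σ x_i + n u`. Each `x_i` and `n u` is at most `T`, so it suffices that
`(n^p - (n-1)^p)(n - 2) ≤ (n-1)^p - 1`, which compares two secant slopes of the concave
function `t ↦ t^p`, over `[n-1, n]` and over `[1, n-1]`.
-/

open Finset Real

lemma rpow_add_one_sub_rpow_mul_sub_one_le {p a : ℝ} (hp0 : 0 ≤ p) (hp1 : p ≤ 1) (ha : 1 < a) :
    ((a + 1) ^ p - a ^ p) * (a - 1) ≤ a ^ p - 1 := by
  have hslope := (concaveOn_rpow hp0 hp1).slope_anti_adjacent (x := 1) (y := a) (z := a + 1)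
    (Set.mem_Ici.2 zero_le_one) (Set.mem_Ici.2 (by linarith)) ha (lt_add_one a)
  rw [add_sub_cancel_left, div_one, one_rpow, le_div_iff₀ (by linarith)] at hslope
  exact hslope

lemma Finset.sum_rpow_le_card_mul_rpow_sum {ι : Type*} {s : Finset ι} {x : ι → ℝ} {p : ℝ}
    (hp : 0 ≤ p) (hx : ∀ i ∈ s, 0 ≤ x i) :
    ∑ i ∈ s, x i ^ p ≤ #s * (∑ i ∈ s, x i) ^ p := by
  rw [← nsmul_eq_mul, ← sum_const]
  exact sum_le_sum fun i hi => rpow_le_rpow (hx i hi) (single_le_sum hx hi) hp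

/-- the key inequality for the case `k = n - 1` in the proof of the sharp
`p`-variation bound on the star graph `S_n`, for `0 < p ≤ 1`. -/
theorem sn_case_k_eq_n_sub_one_inequality (p : ℝ) (hp0 : 0 < p) (hp1 : p ≤ 1)
    (n : ℕ) (hn : 3 ≤ n) (x : ℕ → ℝ) (u : ℝ) (hu : 0 ≤ u)
    (hx : ∀ i ∈ Finset.Icc 2 (n - 1), 0 ≤ x i) :
    ∑ i ∈ Finset.Icc 2 (n - 1), x i ^ p + u ^ p ≤
      (((n : ℝ) - 1) / n) ^ p *
        (∑ i ∈ Finset.Icc 2 (n - 1), x i ^ p +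
          (∑ i ∈ Finset.Icc 2 (n - 1), x i + (n : ℝ) * u) ^ p) := by
  have hn' : (3 : ℝ) ≤ n := by exact_mod_cast hn
  set A := ∑ i ∈ Icc 2 (n - 1), x i ^ p
  set S := ∑ i ∈ Icc 2 (n - 1), x i
  have hS : 0 ≤ S := sum_nonneg hx
  have hnu : 0 ≤ (n : ℝ) * u := by positivity
  have hA : A ≤ (n - 2) * (S + n * u) ^ p := by
    have hcard : (#(Icc 2 (n - 1)) : ℝ) = n - 2 := by
      rw [Nat.card_Icc, show n - 1 + 1 - 2 = n - 2 by omega, Nat.cast_sub (by omega)]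
      norm_num
    calc A ≤ #(Icc 2 (n - 1)) * S ^ p := sum_rpow_le_card_mul_rpow_sum hp0.le hx
      _ ≤ (n - 2) * (S + n * u) ^ p := by rw [hcard]; gcongr <;> linarith
  have hu' : (n : ℝ) ^ p * u ^ p ≤ (S + n * u) ^ p := by
    rw [← mul_rpow (by positivity) hu]
    gcongr
    linarith
  have hmono : ((n : ℝ) - 1) ^ p ≤ (n : ℝ) ^ p := by gcongr <;> linarith
  have hslope := rpow_add_one_sub_rpow_mul_sub_one_le hp0.le hp1 (a := n - 1) (by linarith)
  rw [sub_add_cancel, sub_sub, one_add_one_eq_two] at hslope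
  rw [div_rpow (by linarith) (by positivity), div_mul_eq_mul_div, le_div_iff₀ (by positivity)]
  linarith [mul_le_mul_of_nonneg_left hA (sub_nonneg.2 hmono),
    mul_le_mul_of_nonneg_right hslope (rpow_nonneg (by linarith : 0 ≤ S + n * u) p)]
end
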